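/- arXiv:2601.18608 — 3 statements merged into one kernel-verified Lean document; each statement's English description precedes it below -/
import Mathlib

section
/- Let d ≥ 2, let 1 ≤ k ≤ d, and let ν : 2^D → ℝ be a cooperative game on D = {1,…,d}. Suppose the vector I = (I_T)_{T ⊆ D, |T| ≤ k} minimizes the k_ADD-SHAP objective Σ_{S ⊆ D} μ(S)·(ν(S) − Σ_{T ⊆ D, |T| ≤ k} γ^{|T|}_{|S∩T|}·I_T)² subject to the constraint ν(D) − ν(∅) = Σ_{T ⊆ D, |T| ≤ k} (γ^{|T|}_{|T|} − γ^{|T|}_0)·I_T. Then for every player i ∈ D, I_{{i}} = φ_i^SV[ν], i.e., k_ADD-SHAP converges to the Shapley value. -/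
open Finset

/-- Shapley value of player `i` in the game `ν` on `D = Fin d`. -/
noncomputable def shapley (d : ℕ) (ν : Finset (Fin d) → ℝ) (i : Fin d) : ℝ :=
  (1 / (d : ℝ)) * ∑ S ∈ ((Finset.univ : Finset (Fin d)).erase i).powerset,
    (ν (insert i S) - ν S) / ((d - 1).choose S.card : ℝ)

/-- Shapley kernel weights `μ(S)`. -/
noncomputable def shapleyWeight (d : ℕ) (S : Finset (Fin d)) : ℝ :=
  if 0 < S.card ∧ S.card < d then 1 / ((d - 2).choose (S.card - 1) : ℝ) else 0

/-- `γ^t_r = Σ_{ℓ=0}^r C(r,ℓ)·B_{t−ℓ}`, where `B` are the Bernoulli numbers with `B_1 = −1/2`. -/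
noncomputable def gammaCoeff (t r : ℕ) : ℝ :=
  ∑ ℓ ∈ Finset.range (r + 1), (r.choose ℓ : ℝ) * ((bernoulli (t - ℓ) : ℚ) : ℝ)

/-! The `k_ADD` model `S ↦ ∑_T γ^{|T|}_{|S ∩ T|} I_T` has Shapley value `I_{{i}}` at `i`.
Indeed, for `i ∈ T` the marginal contribution of `i` to the basis game `S ↦ γ^{|T|}_{|S ∩ T|}`
is `γ^{|T|-1}_{|S ∩ (T ∖ {i})|}` (a Pascal rule for `γ`), Shapley's average makes
`|S ∩ (T ∖ {i})|` uniform on `{0, …, |T| - 1}`, and `∑_r γ^q_r = [q = 0]` by telescoping and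
`∑_{j<n} C(n,j) B_j = [n = 1]`. For the residual `r = ν - model`, minimality under the
perturbations `I + ε (e_{i} - e_{j})`, which keep the constraint, gives
`∑_S μ(S) r(S) (1_{i ∈ S} - 1_{j ∈ S}) = 0`, and the constraint itself gives `r(D) = r(∅)`.
The Shapley value is a combination of exactly these quantities, so `φ_i(r) = 0`. -/

theorem inv_choose_add_inv_choose_succ {q r : ℕ} (hr : r ≤ q) :
    1 / (((q : ℝ) + 2) * (q + 1).choose r) + 1 / (((q : ℝ) + 2) * (q + 1).choose (r + 1)) =
      1 / (((q : ℝ) + 1) * q.choose r) := by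
  have hA : ((q : ℝ) + 1) * q.choose r = (q + 1).choose (r + 1) * (r + 1) := by
    exact_mod_cast Nat.add_one_mul_choose_eq q r
  have hB : (q.choose r : ℝ) * (q + 1) = (q + 1).choose r * (q + 1 - r) := by
    rw [← Nat.cast_add_one, ← Nat.cast_sub (by omega)]
    exact_mod_cast Nat.choose_mul_succ_eq q r
  have h0 : (0 : ℝ) < q.choose r := by exact_mod_cast Nat.choose_pos hr
  have h1 : (0 : ℝ) < (q + 1).choose r := by exact_mod_cast Nat.choose_pos (by omega)
  have h2 : (0 : ℝ) < (q + 1).choose (r + 1) := by exact_mod_cast Nat.choose_pos (by omega)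
  field_simp
  linear_combination ((q + 1).choose (r + 1) : ℝ) * hB + ((q + 1).choose r : ℝ) * hA

theorem sum_choose_div_choose_add (N q r : ℕ) (hr : r ≤ q) :
    ∑ m ∈ range (N + 1), (N.choose m : ℝ) / (N + q).choose (m + r) =
      ((N : ℝ) + q + 1) / ((q + 1) * q.choose r) := by
  induction N generalizing q r with
  | zero => simp; field_simp
  | succ N ih =>
    have pascal : ∑ m ∈ range (N + 2), ((N + 1).choose m : ℝ) / (N + 1 + q).choose (m + r) =
        ∑ m ∈ range (N + 1), (N.choose m : ℝ) / (N + (q + 1)).choose (m + r) +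
        ∑ m ∈ range (N + 1), (N.choose m : ℝ) / (N + (q + 1)).choose (m + (r + 1)) := by
      have tail : ∑ m ∈ range (N + 2), (N.choose m : ℝ) / (N + (q + 1)).choose (m + r) =
          ∑ m ∈ range (N + 1), (N.choose m : ℝ) / (N + (q + 1)).choose (m + r) := by
        simp [sum_range_succ _ (N + 1)]
      rw [← tail, sum_range_succ', sum_range_succ' _ (N + 1)]
      simp only [Nat.choose_succ_succ', Nat.cast_add, add_div, sum_add_distrib,
        Nat.choose_zero_right, Nat.add_right_comm _ 1, ← add_assoc]
      ring
    rw [pascal, ih _ _ (by omega), ih _ _ (by omega)]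
    push_cast
    calc _ = ((N : ℝ) + q + 2) *
          (1 / ((q + 2) * (q + 1).choose r) + 1 / ((q + 2) * (q + 1).choose (r + 1))) := by ring
      _ = _ := by rw [inv_choose_add_inv_choose_succ hr]; ring

theorem sum_powerset_one_div_choose_card_add {α : Type*} (W : Finset α) {q r : ℕ} (hr : r ≤ q) :
    ∑ B ∈ W.powerset, (1 : ℝ) / (#W + q).choose (#B + r) =
      ((#W : ℝ) + q + 1) / ((q + 1) * q.choose r) := by
  rw [sum_powerset_apply_card (fun m => (1 : ℝ) / (#W + q).choose (m + r)),
    ← sum_choose_div_choose_add _ _ _ hr]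
  simp [div_eq_mul_inv]

theorem Finset.sum_powerset_union_of_disjoint {α β : Type*} [DecidableEq α] [AddCommMonoid β]
    {U W : Finset α} (h : Disjoint U W) (f : Finset α → β) :
    ∑ S ∈ (U ∪ W).powerset, f S = ∑ A ∈ U.powerset, ∑ B ∈ W.powerset, f (A ∪ B) := by
  rw [← sum_product']
  refine sum_nbij' (fun S => (S ∩ U, S ∩ W)) (fun p => p.1 ∪ p.2) ?_ ?_ ?_ ?_ ?_ <;>
    simp only [mem_product, mem_powerset]
  · exact fun S _ => ⟨inter_subset_right, inter_subset_right⟩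
  · exact fun p hp => union_subset_union hp.1 hp.2
  · exact fun S hS => by rw [← inter_union_distrib_left, inter_eq_left.2 hS]
  · rintro ⟨A, B⟩ ⟨hA, hB⟩
    simp only [union_inter_distrib_right, inter_eq_left.2 hA, inter_eq_left.2 hB,
      disjoint_iff_inter_eq_empty.1 (h.mono_left hA),
      disjoint_iff_inter_eq_empty.1 (h.symm.mono_left hB), union_empty, empty_union]
  · exact fun S hS => by rw [← inter_union_distrib_left, inter_eq_left.2 hS]

theorem gammaCoeff_succ_succ (q r : ℕ) :
    gammaCoeff (q + 1) (r + 1) = gammaCoeff q r + gammaCoeff (q + 1) r := by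
  have tail : gammaCoeff (q + 1) r =
      ∑ ℓ ∈ range (r + 2), (r.choose ℓ : ℝ) * ((bernoulli (q + 1 - ℓ) : ℚ) : ℝ) := by
    simp [gammaCoeff, sum_range_succ _ (r + 1)]
  rw [tail, gammaCoeff, gammaCoeff, sum_range_succ', sum_range_succ' _ (r + 1)]
  simp only [Nat.choose_succ_succ', Nat.cast_add, add_mul, sum_add_distrib, Nat.choose_zero_right,
    Nat.add_sub_add_right]
  ring

theorem gammaCoeff_self_sub_gammaCoeff_zero (n : ℕ) :
    gammaCoeff n n - gammaCoeff n 0 = if n = 1 then 1 else 0 := by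
  have reflect :
      gammaCoeff n n = ∑ j ∈ range (n + 1), (n.choose j : ℝ) * ((bernoulli j : ℚ) : ℝ) := by
    rw [gammaCoeff, ← sum_range_reflect]
    refine sum_congr rfl fun j hj => ?_
    rw [mem_range] at hj
    rw [Nat.add_sub_cancel, Nat.sub_sub_self (by omega), Nat.choose_symm (by omega)]
  have := congrArg (Rat.cast (K := ℝ)) (sum_bernoulli n)
  push_cast at this
  rw [reflect, sum_range_succ, this]
  split_ifs <;> simp [gammaCoeff]

theorem sum_gammaCoeff (q : ℕ) : ∑ r ∈ range (q + 1), gammaCoeff q r = if q = 0 then 1 else 0 := by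
  have telescope (r : ℕ) : gammaCoeff q r = gammaCoeff (q + 1) (r + 1) - gammaCoeff (q + 1) r := by
    rw [gammaCoeff_succ_succ]; ring
  rw [sum_congr rfl fun r _ => telescope r, sum_range_sub (gammaCoeff (q + 1)),
    gammaCoeff_self_sub_gammaCoeff_zero]
  simp

theorem gammaCoeff_one_card_inter_singleton {α : Type*} [DecidableEq α] (S : Finset α) (i : α) :
    gammaCoeff 1 #(S ∩ {i}) = (if i ∈ S then 1 else 0) - 1 / 2 := by
  by_cases h : i ∈ S
  · simp [h, gammaCoeff, sum_range_succ]; norm_num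
  · simp [h, gammaCoeff]; norm_num

theorem sum_mul_sub_mul_eq_zero_of_forall_le {σ : Type*} (s : Finset σ) (w y f g : σ → ℝ)
    (hmin : ∀ ε : ℝ, ∑ x ∈ s, w x * (y x - f x) ^ 2 ≤ ∑ x ∈ s, w x * (y x - (f x + ε * g x)) ^ 2) :
    ∑ x ∈ s, w x * (y x - f x) * g x = 0 := by
  set B := ∑ x ∈ s, w x * (y x - f x) * g x
  set C := ∑ x ∈ s, w x * g x ^ 2
  have expand (ε : ℝ) : ∑ x ∈ s, w x * (y x - (f x + ε * g x)) ^ 2 =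
      ∑ x ∈ s, w x * (y x - f x) ^ 2 + (C * (ε * ε) + (-2 * B) * ε) := by
    simp only [B, C, sum_mul, mul_sum, ← sum_add_distrib]
    exact sum_congr rfl fun x _ => by ring
  have hdisc := discrim_le_zero (a := C) (b := -2 * B) (c := 0) fun ε => by
    linarith [hmin ε, expand ε]
  rw [discrim] at hdisc
  nlinarith [sq_nonneg B]

theorem shapley_sub {d : ℕ} (ν ν' : Finset (Fin d) → ℝ) (i : Fin d) :
    shapley d (fun S => ν S - ν' S) i = shapley d ν i - shapley d ν' i := by
  simp only [shapley, ← mul_sub, ← sum_sub_distrib]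
  congr 1
  exact sum_congr rfl fun S _ => by ring

theorem shapley_sum_mul {d : ℕ} {ι : Type*} (F : Finset ι) (ν : ι → Finset (Fin d) → ℝ) (c : ι → ℝ)
    (i : Fin d) :
    shapley d (fun S => ∑ T ∈ F, ν T S * c T) i = ∑ T ∈ F, shapley d (ν T) i * c T := by
  simp only [shapley, ← sum_sub_distrib, sum_div, mul_sum, sum_mul]
  rw [sum_comm]
  exact sum_congr rfl fun T _ => sum_congr rfl fun S _ => by ring

theorem shapley_eq_of_marginal_eq_card_inter {d : ℕ} (ν : Finset (Fin d) → ℝ) (i : Fin d)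
    {U : Finset (Fin d)} (hiU : i ∉ U) (h : ℕ → ℝ)
    (hmarg : ∀ S, i ∉ S → ν (insert i S) - ν S = h #(S ∩ U)) :
    shapley d ν i = (∑ a ∈ range (#U + 1), h a) / (#U + 1) := by
  rw [shapley]
  set V := (univ : Finset (Fin d)).erase i
  set W := V \ U
  have hUV : U ⊆ V := subset_erase.2 ⟨subset_univ U, hiU⟩
  have hWU : #W + #U = d - 1 := by
    rw [card_sdiff_add_card_eq_card hUV, card_erase_of_mem (mem_univ i), card_univ,
      Fintype.card_fin]
  have hcard : (d : ℝ) = #W + #U + 1 := by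
    have := i.pos
    exact_mod_cast (by omega : d = #W + #U + 1)
  have inner (A : Finset (Fin d)) (hA : A ∈ U.powerset) :
      ∑ B ∈ W.powerset, h #((A ∪ B) ∩ U) / (d - 1).choose #(A ∪ B) =
        h #A * (d / ((#U + 1) * (#U).choose #A)) := by
    rw [mem_powerset] at hA
    have split (B : Finset (Fin d)) (hB : B ∈ W.powerset) :
        h #((A ∪ B) ∩ U) / (d - 1).choose #(A ∪ B) = h #A * (1 / (#W + #U).choose (#B + #A)) := by
      rw [mem_powerset] at hB
      have hUB : Disjoint U B := disjoint_sdiff.mono_right hB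
      rw [union_inter_distrib_right, inter_eq_left.2 hA, disjoint_iff_inter_eq_empty.1 hUB.symm,
        union_empty, card_union_of_disjoint (hUB.mono_left hA), hWU, add_comm #A, one_div,
        div_eq_mul_inv]
    rw [sum_congr rfl split, ← mul_sum, sum_powerset_one_div_choose_card_add W (card_le_card hA),
      hcard]
  rw [sum_congr rfl fun S hS => by
      rw [hmarg S fun hiS => (mem_erase.1 (mem_powerset.1 hS hiS)).1 rfl],
    ← union_sdiff_of_subset hUV, sum_powerset_union_of_disjoint disjoint_sdiff,
    sum_congr rfl inner, sum_powerset_apply_card (fun a => h a * (d / ((#U + 1) * (#U).choose a))),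
    mul_sum, sum_div]
  refine sum_congr rfl fun a ha => ?_
  have : (0 : ℝ) < (#U).choose a := by
    exact_mod_cast Nat.choose_pos (by simpa [Nat.lt_succ_iff] using ha)
  have := i.pos
  rw [nsmul_eq_mul]
  field_simp

theorem shapley_gammaCoeff_card_inter {d : ℕ} (i : Fin d) (T : Finset (Fin d)) :
    shapley d (fun S => gammaCoeff #T #(S ∩ T)) i = if T = {i} then 1 else 0 := by
  by_cases hiT : i ∈ T
  · set U := T.erase i
    have hT : #T = #U + 1 := (card_erase_add_one hiT).symm
    rw [shapley_eq_of_marginal_eq_card_inter _ i (notMem_erase i T) (gammaCoeff #U) fun S hiS => by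
        rw [insert_inter_of_mem hiT, card_insert_of_notMem fun h => hiS (mem_inter.1 h).1, hT,
          gammaCoeff_succ_succ, inter_erase, erase_eq_of_notMem fun h => hiS (mem_inter.1 h).1]
        ring,
      sum_gammaCoeff]
    have : #U = 0 ↔ T = {i} := by
      rw [card_eq_zero, erase_eq_empty_iff]
      simp [Finset.ne_empty_of_mem hiT]
    simp only [← this]
    split_ifs with hU
    · rw [hU]; norm_num
    · exact zero_div _
  · have : T ≠ {i} := by rintro rfl; exact hiT (mem_singleton_self i)
    simp [shapley, insert_inter_of_notMem hiT, this]

theorem shapleyWeight_mul_card {d : ℕ} (hd : 2 ≤ d) {S : Finset (Fin d)} (hS : S ≠ univ) :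
    shapleyWeight d S * #S = (d - 1) * (1 / (d - 1).choose #S - if S = ∅ then 1 else 0) := by
  by_cases hS0 : S = ∅
  · simp [hS0, shapleyWeight]
  have hlt : #S < d := by simpa using card_lt_card (ssubset_univ_iff.2 hS)
  obtain ⟨n, rfl⟩ : ∃ n, d = n + 2 := ⟨d - 2, by omega⟩
  obtain ⟨k, hk⟩ : ∃ k, #S = k + 1 :=
    ⟨#S - 1, by have := card_pos.2 (nonempty_iff_ne_empty.2 hS0); omega⟩
  have hpascal : ((n : ℝ) + 1) * n.choose k = (n + 1).choose (k + 1) * (k + 1) := by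
    exact_mod_cast Nat.add_one_mul_choose_eq n k
  have h0 : (0 : ℝ) < n.choose k := by exact_mod_cast Nat.choose_pos (by omega)
  have h1 : (0 : ℝ) < (n + 1).choose (k + 1) := by exact_mod_cast Nat.choose_pos (by omega)
  rw [shapleyWeight, if_pos ⟨by omega, hlt⟩, if_neg hS0, hk, Nat.add_sub_cancel,
    show n + 2 - 1 = n + 1 by omega]
  push_cast
  field_simp
  linear_combination -hpascal

theorem shapleyWeight_insert_mul {d : ℕ} (hd : 2 ≤ d) {S : Finset (Fin d)} {i : Fin d}
    (hiS : i ∉ S) :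
    shapleyWeight d (insert i S) * (d - 1 - #S) =
      (d - 1) * (1 / (d - 1).choose #S - if insert i S = univ then 1 else 0) := by
  have hcard : #(insert i S) = #S + 1 := card_insert_of_notMem hiS
  by_cases hSu : insert i S = univ
  · have : #S = d - 1 := by
      have := congrArg card hSu
      rw [hcard, card_univ, Fintype.card_fin] at this
      omega
    simp [hSu, shapleyWeight, this]
  have hlt : #S + 1 < d := by simpa [hcard] using card_lt_card (ssubset_univ_iff.2 hSu)
  obtain ⟨n, rfl⟩ : ∃ n, d = n + 2 := ⟨d - 2, by omega⟩
  have hpascal : (n.choose #S : ℝ) * (n + 1) = (n + 1).choose #S * (n + 1 - #S) := by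
    rw [← Nat.cast_add_one, ← Nat.cast_sub (by omega)]
    exact_mod_cast Nat.choose_mul_succ_eq n #S
  have h0 : (0 : ℝ) < n.choose #S := by exact_mod_cast Nat.choose_pos (by omega)
  have h1 : (0 : ℝ) < (n + 1).choose #S := by exact_mod_cast Nat.choose_pos (by omega)
  rw [shapleyWeight, if_pos ⟨by omega, by omega⟩, if_neg hSu, hcard, Nat.add_sub_cancel,
    show n + 2 - 1 = n + 1 by omega]
  push_cast
  field_simp
  linear_combination -hpascal

theorem mul_shapley_eq_sum_shapleyWeight {d : ℕ} (hd : 2 ≤ d) (r : Finset (Fin d) → ℝ) (i : Fin d) :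
    (d : ℝ) * (d - 1) * shapley d r i =
      ∑ S, shapleyWeight d S * (d * (if i ∈ S then 1 else 0) - #S) * r S +
        (d - 1) * (r univ - r ∅) := by
  rw [shapley]
  set V := (univ : Finset (Fin d)).erase i
  have hiV : i ∉ V := notMem_erase i univ
  have hV : insert i V = univ := insert_erase (mem_univ i)
  have pair (S : Finset (Fin d)) (hS : S ∈ V.powerset) :
      shapleyWeight d S * (d * (if i ∈ S then 1 else 0) - #S) * r S +
        shapleyWeight d (insert i S) * (d * (if i ∈ insert i S then 1 else 0) - #(insert i S)) *
          r (insert i S) =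
      (d - 1) * ((r (insert i S) - r S) / (d - 1).choose #S) -
        (d - 1) * (if insert i S = univ then r (insert i S) else 0) +
        (d - 1) * (if S = ∅ then r S else 0) := by
    have hiS : i ∉ S := fun h => hiV (mem_powerset.1 hS h)
    have hSu : S ≠ univ := fun h => hiS (h ▸ mem_univ i)
    have h1 := shapleyWeight_mul_card hd hSu
    have h2 := shapleyWeight_insert_mul hd hiS
    rw [if_neg hiS, if_pos (mem_insert_self i S), card_insert_of_notMem hiS]
    split_ifs at h1 h2 ⊢ <;> push_cast <;> linear_combination (-r S) * h1 + r (insert i S) * h2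
  have top : ∑ S ∈ V.powerset, (if insert i S = univ then r (insert i S) else 0) = r univ := by
    rw [sum_eq_single_of_mem V (mem_powerset_self V) fun S hS hSV => if_neg fun h => hSV ?_, hV,
      if_pos rfl]
    rw [← erase_insert (fun h => hiV (mem_powerset.1 hS h)), h, ← hV, erase_insert hiV]
  have bottom : ∑ S ∈ V.powerset, (if S = ∅ then r S else 0) = r ∅ := by
    rw [sum_ite_eq' _ _ r, if_pos (empty_mem_powerset V)]
  rw [← powerset_univ, ← hV, sum_powerset_insert hiV, ← sum_add_distrib, sum_congr rfl pair,
    sum_add_distrib, sum_sub_distrib, ← mul_sum, ← mul_sum, ← mul_sum, top, bottom, hV]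
  field_simp
  ring

theorem shapley_eq_zero_of_sum_shapleyWeight_eq_zero {d : ℕ} (hd : 2 ≤ d)
    {r : Finset (Fin d) → ℝ} {i : Fin d} (heff : r univ = r ∅)
    (horth : ∀ j, ∑ S, shapleyWeight d S * r S *
      ((if i ∈ S then 1 else 0) - (if j ∈ S then 1 else 0)) = 0) :
    shapley d r i = 0 := by
  have hcount (S : Finset (Fin d)) :
      ∑ j, ((if i ∈ S then 1 else 0) - (if j ∈ S then 1 else 0) : ℝ) =
        d * (if i ∈ S then 1 else 0) - #S := by
    simp [sum_sub_distrib]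
  have hsum : ∑ S, shapleyWeight d S * (d * (if i ∈ S then 1 else 0) - #S) * r S = 0 := by
    simp_rw [← hcount, mul_sum, sum_mul]
    rw [sum_comm]
    exact sum_eq_zero fun j _ => (sum_congr rfl fun S _ => by ring).trans (horth j)
  have hd' : (d : ℝ) * (d - 1) ≠ 0 := by
    have : (2 : ℝ) ≤ d := by exact_mod_cast hd
    exact mul_ne_zero (by positivity) (by linarith)
  have := mul_shapley_eq_sum_shapleyWeight hd r i
  rw [hsum, heff, sub_self, mul_zero, add_zero] at this
  exact (mul_eq_zero.1 this).resolve_left hd'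

theorem sum_mul_add_smul_single_sub_single {α : Type*} [DecidableEq α] (F : Finset α)
    (a I : α → ℝ) {u v : α} (hu : u ∈ F) (hv : v ∈ F) (ε : ℝ) :
    ∑ T ∈ F, a T * (I + ε • (Pi.single u 1 - Pi.single v 1) : α → ℝ) T =
      ∑ T ∈ F, a T * I T + ε * (a u - a v) := by
  simp [mul_add, mul_sub, sum_add_distrib, sum_sub_distrib, Pi.single_apply, hu, hv]
  ring

noncomputable def kaddModel (d k : ℕ) (I : Finset (Fin d) → ℝ) (S : Finset (Fin d)) : ℝ :=
  ∑ T ∈ (univ : Finset (Fin d)).powerset.filter (fun T => T.card ≤ k),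
    gammaCoeff T.card (S ∩ T).card * I T

theorem singleton_mem_filter_card_le {d k : ℕ} (hk : 1 ≤ k) (i : Fin d) :
    {i} ∈ (univ : Finset (Fin d)).powerset.filter (fun T => T.card ≤ k) := by
  simpa using hk

theorem shapley_kaddModel {d k : ℕ} (hk : 1 ≤ k) (I : Finset (Fin d) → ℝ) (i : Fin d) :
    shapley d (kaddModel d k I) i = I {i} := by
  unfold kaddModel
  rw [shapley_sum_mul]
  simp [shapley_gammaCoeff_card_inter, hk]

theorem kaddModel_univ_sub_kaddModel_empty (d k : ℕ) (I : Finset (Fin d) → ℝ) :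
    kaddModel d k I univ - kaddModel d k I ∅ =
      ∑ T ∈ (univ : Finset (Fin d)).powerset.filter (fun T => T.card ≤ k),
        (gammaCoeff T.card T.card - gammaCoeff T.card 0) * I T := by
  rw [kaddModel, kaddModel, ← sum_sub_distrib]
  simp [sub_mul]

theorem kaddModel_add_smul_single_sub_single {d k : ℕ} (hk : 1 ≤ k) (I : Finset (Fin d) → ℝ)
    (ε : ℝ) (i j : Fin d) (S : Finset (Fin d)) :
    kaddModel d k (I + ε • (Pi.single {i} 1 - Pi.single {j} 1)) S =
      kaddModel d k I S + ε * ((if i ∈ S then 1 else 0) - (if j ∈ S then 1 else 0)) := by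
  rw [kaddModel, kaddModel, sum_mul_add_smul_single_sub_single _ _ _
    (singleton_mem_filter_card_le hk i) (singleton_mem_filter_card_le hk j)]
  simp only [card_singleton, gammaCoeff_one_card_inter_singleton]
  ring

theorem kadd_shap_converges_general
    (d k : ℕ) (hd : 2 ≤ d) (hk1 : 1 ≤ k)
    (ν : Finset (Fin d) → ℝ)
    (I : Finset (Fin d) → ℝ)
    (hconstr : ν Finset.univ - ν ∅ =
      ∑ T ∈ (Finset.univ : Finset (Fin d)).powerset.filter (fun T => T.card ≤ k),
        (gammaCoeff T.card T.card - gammaCoeff T.card 0) * I T)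
    (hmin : ∀ J : Finset (Fin d) → ℝ,
      (ν Finset.univ - ν ∅ =
        ∑ T ∈ (Finset.univ : Finset (Fin d)).powerset.filter (fun T => T.card ≤ k),
          (gammaCoeff T.card T.card - gammaCoeff T.card 0) * J T) →
      (∑ S : Finset (Fin d), shapleyWeight d S *
          (ν S - ∑ T ∈ (Finset.univ : Finset (Fin d)).powerset.filter (fun T => T.card ≤ k),
            gammaCoeff T.card (S ∩ T).card * I T) ^ 2) ≤
        (∑ S : Finset (Fin d), shapleyWeight d S *
          (ν S - ∑ T ∈ (Finset.univ : Finset (Fin d)).powerset.filter (fun T => T.card ≤ k),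
            gammaCoeff T.card (S ∩ T).card * J T) ^ 2)) :
    ∀ i : Fin d, I {i} = shapley d ν i := by
  intro i
  have heff : ν univ - kaddModel d k I univ = ν ∅ - kaddModel d k I ∅ := by
    rw [sub_eq_sub_iff_sub_eq_sub, hconstr, kaddModel_univ_sub_kaddModel_empty]
  have horth (j : Fin d) : ∑ S, shapleyWeight d S * (ν S - kaddModel d k I S) *
      ((if i ∈ S then 1 else 0) - (if j ∈ S then 1 else 0)) = 0 := by
    refine sum_mul_sub_mul_eq_zero_of_forall_le univ _ ν (kaddModel d k I) _ fun ε => ?_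
    have hJ := hmin (I + ε • (Pi.single {i} 1 - Pi.single {j} 1)) (by
      rw [hconstr, sum_mul_add_smul_single_sub_single _ _ _
        (singleton_mem_filter_card_le hk1 i) (singleton_mem_filter_card_le hk1 j)]
      simp)
    simpa only [← kaddModel.eq_1, kaddModel_add_smul_single_sub_single hk1] using hJ
  calc I {i} = shapley d (kaddModel d k I) i := (shapley_kaddModel hk1 I i).symm
    _ = shapley d ν i - shapley d (fun S => ν S - kaddModel d k I S) i := by
      rw [shapley_sub]; ring
    _ = shapley d ν i := by
      rw [shapley_eq_zero_of_sum_shapleyWeight_eq_zero hd heff horth, sub_zero]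

/-- `k_ADD`-SHAP converges to the Shapley value: any minimizer of the `k_ADD`-SHAP objective
subject to its efficiency constraint has singleton coefficients equal to the Shapley values. -/
theorem kadd_shap_converges
    (d k : ℕ) (hd : 2 ≤ d) (hk1 : 1 ≤ k) (hkd : k ≤ d)
    (ν : Finset (Fin d) → ℝ)
    (I : Finset (Fin d) → ℝ)
    (hconstr : ν Finset.univ - ν ∅ =
      ∑ T ∈ (Finset.univ : Finset (Fin d)).powerset.filter (fun T => T.card ≤ k),
        (gammaCoeff T.card T.card - gammaCoeff T.card 0) * I T)
    (hmin : ∀ J : Finset (Fin d) → ℝ,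
      (ν Finset.univ - ν ∅ =
        ∑ T ∈ (Finset.univ : Finset (Fin d)).powerset.filter (fun T => T.card ≤ k),
          (gammaCoeff T.card T.card - gammaCoeff T.card 0) * J T) →
      (∑ S : Finset (Fin d), shapleyWeight d S *
          (ν S - ∑ T ∈ (Finset.univ : Finset (Fin d)).powerset.filter (fun T => T.card ≤ k),
            gammaCoeff T.card (S ∩ T).card * I T) ^ 2) ≤
        (∑ S : Finset (Fin d), shapleyWeight d S *
          (ν S - ∑ T ∈ (Finset.univ : Finset (Fin d)).powerset.filter (fun T => T.card ≤ k),
            gammaCoeff T.card (S ∩ T).card * J T) ^ 2)) :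
    ∀ i : Fin d, I {i} = shapley d ν i :=
  kadd_shap_converges_general d k hd hk1 ν I hconstr hmin
end

section
/- Let d ≥ 2 and let ν : 2^D → ℝ be a cooperative game on D = {1,…,d} with ν(∅) = 0. Then the vector of Shapley values (φ_1^SV[ν],…,φ_d^SV[ν]) is the unique minimizer of the weighted least squares objective Σ_{S ⊆ D} μ(S)·(ν(S) − Σ_{i ∈ S} φ_i)² over the affine set {φ ∈ ℝ^d : Σ_{i=1}^d φ_i = ν(D)}; that is, the least-squares (KernelSHAP) characterization of the Shapley value agrees with the marginal-contribution formula. -/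
open Finset

/-
The objective is a quadratic function of `φ` whose quadratic part `x ↦ ∑ S, μ S * (∑ i ∈ S, x i)²`
is positive definite, because singletons have weight `1`. Hence an efficient vector at which all
partial derivatives of the objective coincide is its unique minimizer on the hyperplane
`∑ i, φ i = ν D`: the linear term vanishes in every direction `x` with `∑ i, x i = 0`.

For the Shapley value, efficiency is the telescoping of marginal contributions, using
`t / C(d-1, t-1) = (d-t) / C(d-1, t)`. For the partial derivatives at `i ≠ j`, coalitions containing
both players cancel, and the remaining ones pair up as `T ∪ {i}`, `T ∪ {j}` with `T ⊆ D \ {i, j}`;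
the difference then vanishes by
`(d-1) (φ i - φ j) = ∑ T, (ν (T ∪ {i}) - ν (T ∪ {j})) / C(d-2, |T|)` and
`∑ T, 1 / C(d-2, |T|) = d - 1`.
-/

section WeightedLeastSquares

variable {ι : Type*} [Fintype ι]

def wlsObjective (w v : Finset ι → ℝ) (φ : ι → ℝ) : ℝ := ∑ S, w S * (v S - ∑ i ∈ S, φ i) ^ 2

lemma eq_zero_of_sum_weight_mul_sq_nonpos {w : Finset ι → ℝ} (hw : ∀ S, 0 ≤ w S)
    (hw₁ : ∀ i, 0 < w {i}) {x : ι → ℝ} (hx : ∑ S, w S * (∑ k ∈ S, x k) ^ 2 ≤ 0) : x = 0 := by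
  have hterm : ∀ S, w S * (∑ k ∈ S, x k) ^ 2 = 0 :=
    fun S => (sum_eq_zero_iff_of_nonneg fun S _ => by have := hw S; positivity).1
      (le_antisymm hx (sum_nonneg fun S _ => by have := hw S; positivity)) S (mem_univ S)
  funext i
  simpa [(hw₁ i).ne'] using hterm {i}

variable [DecidableEq ι] (w v : Finset ι → ℝ)

-- `-1/2` times the `i`-th partial derivative of `wlsObjective w v` at `φ`.
def wlsGrad (φ : ι → ℝ) (i : ι) : ℝ := ∑ S with i ∈ S, w S * (v S - ∑ k ∈ S, φ k)

lemma sum_mul_sum_mem_eq_sum_wlsGrad_mul (φ x : ι → ℝ) :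
    ∑ S, w S * (v S - ∑ k ∈ S, φ k) * ∑ k ∈ S, x k = ∑ i, wlsGrad w v φ i * x i := by
  simp only [wlsGrad, mul_sum, sum_mul, sum_filter]
  rw [sum_comm]
  refine sum_congr rfl fun S _ => ?_
  simp only [ite_mul, zero_mul, ← sum_filter, filter_mem_eq_inter, univ_inter]

lemma wlsObjective_add (φ x : ι → ℝ) :
    wlsObjective w v (φ + x) = wlsObjective w v φ - 2 * ∑ i, wlsGrad w v φ i * x i
      + ∑ S, w S * (∑ k ∈ S, x k) ^ 2 := by
  rw [← sum_mul_sum_mem_eq_sum_wlsGrad_mul, wlsObjective, wlsObjective, mul_sum, ← sum_sub_distrib,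
    ← sum_add_distrib]
  refine sum_congr rfl fun S _ => ?_
  simp only [Pi.add_apply, sum_add_distrib]
  ring

variable {w} in
theorem wls_constrained_minimizer_iff (hw : ∀ S, 0 ≤ w S) (hw₁ : ∀ i, 0 < w {i})
    {c : ℝ} {φ₀ : ι → ℝ} (hφ₀ : ∑ i, φ₀ i = c) (hgrad : ∃ g, ∀ i, wlsGrad w v φ₀ i = g)
    (φ : ι → ℝ) :
    (∑ i, φ i = c ∧ ∀ ψ : ι → ℝ, ∑ i, ψ i = c → wlsObjective w v φ ≤ wlsObjective w v ψ) ↔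
      φ = φ₀ := by
  obtain ⟨g, hg⟩ := hgrad
  have pythagoras : ∀ ψ : ι → ℝ, ∑ i, ψ i = c → wlsObjective w v ψ =
      wlsObjective w v φ₀ + ∑ S, w S * (∑ k ∈ S, (ψ - φ₀) k) ^ 2 := by
    intro ψ hψ
    have hx : ∑ i, (ψ - φ₀) i = 0 := by simp [sum_sub_distrib, hψ, hφ₀]
    rw [← add_sub_cancel φ₀ ψ, wlsObjective_add]
    simp only [hg, ← mul_sum, hx, add_sub_cancel]
    ring
  constructor
  · rintro ⟨hφ, hmin⟩
    have := hmin φ₀ hφ₀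
    rw [pythagoras φ hφ] at this
    exact sub_eq_zero.1 (eq_zero_of_sum_weight_mul_sq_nonpos hw hw₁ (by linarith))
  · rintro rfl
    refine ⟨hφ₀, fun ψ hψ => ?_⟩
    rw [pythagoras ψ hψ]
    exact le_add_of_nonneg_right (sum_nonneg fun S _ => by have := hw S; positivity)

end WeightedLeastSquares

lemma inv_choose_add_inv_choose_succ_s7 {n t : ℕ} (ht : t ≤ n) :
    ((n + 1).choose t : ℝ)⁻¹ + ((n + 1).choose (t + 1) : ℝ)⁻¹ =
      (n + 2) / ((n + 1) * n.choose t) := by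
  have h₁ : (n.choose t : ℝ) * (n + 1) = (n + 1).choose t * (n + 1 - t) := by
    have := Nat.choose_mul_succ_eq n t
    rw [← Nat.cast_inj (R := ℝ)] at this
    push_cast [Nat.cast_sub (by omega : t ≤ n + 1)] at this
    exact this
  have h₂ : ((n : ℝ) + 1) * n.choose t = (n + 1).choose (t + 1) * (t + 1) := by
    exact_mod_cast Nat.add_one_mul_choose_eq n t
  have : (0 : ℝ) < n.choose t := by exact_mod_cast Nat.choose_pos ht
  have : (0 : ℝ) < (n + 1).choose t := by exact_mod_cast Nat.choose_pos (by omega)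
  have : (0 : ℝ) < (n + 1).choose (t + 1) := by exact_mod_cast Nat.choose_pos (by omega)
  have e₁ : ((n + 1).choose t : ℝ)⁻¹ = (n + 1 - t) / ((n + 1) * n.choose t) := by
    field_simp
    linear_combination h₁
  have e₂ : ((n + 1).choose (t + 1) : ℝ)⁻¹ = (t + 1) / ((n + 1) * n.choose t) := by
    field_simp
    linear_combination h₂
  rw [e₁, e₂, ← add_div]
  ring

lemma succ_div_choose_eq_sub_div_choose_succ {n s : ℕ} (hs : s < n) :
    ((s : ℝ) + 1) / n.choose s = (n - s) / n.choose (s + 1) := by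
  have h : (n.choose (s + 1) : ℝ) * (s + 1) = n.choose s * (n - s) := by
    have := Nat.choose_succ_right_eq n s
    rw [← Nat.cast_inj (R := ℝ)] at this
    push_cast [Nat.cast_sub hs.le] at this
    exact this
  have : (0 : ℝ) < n.choose s := by exact_mod_cast Nat.choose_pos hs.le
  have : (0 : ℝ) < n.choose (s + 1) := by exact_mod_cast Nat.choose_pos hs
  field_simp
  linear_combination h

lemma sum_powerset_inv_choose_card {α : Type*} (B : Finset α) :
    ∑ T ∈ B.powerset, (B.card.choose T.card : ℝ)⁻¹ = B.card + 1 := by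
  rw [sum_powerset_apply_card (fun m => (B.card.choose m : ℝ)⁻¹)]
  have : ∀ m ∈ range (B.card + 1), B.card.choose m • (B.card.choose m : ℝ)⁻¹ = 1 := by
    intro m hm
    have : (0 : ℝ) < B.card.choose m := by
      exact_mod_cast Nat.choose_pos (Nat.lt_succ_iff.1 (mem_range.1 hm))
    rw [nsmul_eq_mul, mul_inv_cancel₀ this.ne']
  rw [sum_congr rfl this]
  simp

section PowersetSums

variable {ι β : Type*} [Fintype ι] [DecidableEq ι]

lemma sum_univ_eq_sum_powerset_compl_pair [AddCommMonoid β] {i j : ι} (hij : i ≠ j)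
    (f : Finset ι → β) :
    ∑ S, f S = ∑ T ∈ ({i, j}ᶜ : Finset ι).powerset,
      (f T + f (insert i T) + f (insert j T) + f (insert i (insert j T))) := by
  have hj : j ∉ ({i, j}ᶜ : Finset ι) := by simp
  have hi : i ∉ insert j ({i, j}ᶜ : Finset ι) := by simp [hij]
  have huniv : insert i (insert j ({i, j}ᶜ : Finset ι)) = univ := by
    ext k; by_cases k = i <;> by_cases k = j <;> simp_all
  rw [← powerset_univ, ← huniv, sum_powerset_insert hi, sum_powerset_insert hj,
    sum_powerset_insert hj, ← sum_add_distrib, ← sum_add_distrib, ← sum_add_distrib]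
  refine sum_congr rfl fun T _ => ?_
  abel

lemma sum_sum_compl_eq_sum_sum_erase [AddCommMonoid β] (F : Finset ι → ι → β) :
    ∑ S, ∑ i ∈ Sᶜ, F S i = ∑ T, ∑ i ∈ T, F (T.erase i) i := by
  rw [sum_sigma', sum_sigma']
  refine sum_nbij' (fun p => ⟨insert p.2 p.1, p.2⟩) (fun p => ⟨p.1.erase p.2, p.2⟩)
    ?_ ?_ ?_ ?_ ?_ <;> simp +contextual [insert_erase]

end PowersetSums

section Shapley

variable {d : ℕ}

lemma shapleyWeight_nonneg (S : Finset (Fin d)) : 0 ≤ shapleyWeight d S := by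
  unfold shapleyWeight
  split_ifs <;> positivity

lemma shapleyWeight_singleton (hd : 2 ≤ d) (i : Fin d) : shapleyWeight d {i} = 1 := by
  simp [shapleyWeight, show 1 < d by omega]

lemma shapleyWeight_insert (hd : 2 ≤ d) {k : Fin d} {T : Finset (Fin d)} (hk : k ∉ T)
    (hT : T.card ≤ d - 2) : shapleyWeight d (insert k T) = ((d - 2).choose T.card : ℝ)⁻¹ := by
  rw [shapleyWeight, card_insert_of_notMem hk, if_pos ⟨T.card.succ_pos, by omega⟩,
    Nat.add_sub_cancel, one_div]

lemma card_compl_pair {i j : Fin d} (hij : i ≠ j) : ({i, j}ᶜ : Finset (Fin d)).card = d - 2 := by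
  rw [card_compl, card_pair hij, Fintype.card_fin]

lemma card_le_sub_two_of_mem_powerset_compl_pair {i j : Fin d} (hij : i ≠ j) {T : Finset (Fin d)}
    (hT : T ∈ ({i, j}ᶜ : Finset (Fin d)).powerset) : T.card ≤ d - 2 := by
  have := card_le_card (mem_powerset.1 hT)
  rwa [card_compl_pair hij] at this

variable (ν : Finset (Fin d) → ℝ)

lemma shapley_eq_sum_filter_notMem (i : Fin d) :
    shapley d ν i =
      1 / d * ∑ S with i ∉ S, (ν (insert i S) - ν S) / ((d - 1).choose S.card : ℝ) := by
  rw [shapley]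
  congr 2
  ext S
  simp [subset_erase]

-- The net coefficient of `ν T` in `d * ∑ i, shapley d ν i`.
lemma card_mul_div_choose_pred_sub_eq_ite (hν : ν ∅ = 0) (T : Finset (Fin d)) :
    T.card * ν T / (d - 1).choose (T.card - 1) - (d - T.card) * ν T / (d - 1).choose T.card =
      if T = univ then d * ν univ else 0 := by
  split_ifs with hT
  · simp [hT]
  obtain rfl | hne := T.eq_empty_or_nonempty
  · simp [hν]
  obtain ⟨s, hs⟩ := Nat.exists_eq_add_one_of_ne_zero hne.card_pos.ne'
  have hsd : s < d - 1 := by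
    have := (card_lt_iff_ne_univ T).2 hT
    simp only [Fintype.card_fin] at this
    omega
  have key := succ_div_choose_eq_sub_div_choose_succ hsd
  rw [Nat.cast_sub (by omega : 1 ≤ d)] at key
  rw [hs, Nat.add_sub_cancel, mul_div_right_comm, mul_div_right_comm]
  push_cast
  rw [key]
  ring

theorem sum_shapley (hν : ν ∅ = 0) : ∑ i, shapley d ν i = ν univ := by
  rcases Nat.eq_zero_or_pos d with rfl | hd
  · simp [hν]
  have hswap : ∑ i, ∑ S with i ∉ S, (ν (insert i S) - ν S) / ((d - 1).choose S.card : ℝ) =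
      ∑ S, ∑ i ∈ Sᶜ, (ν (insert i S) - ν S) / ((d - 1).choose S.card : ℝ) :=
    sum_comm' (by simp)
  have hgain : ∑ S, ∑ i ∈ Sᶜ, ν (insert i S) / ((d - 1).choose S.card : ℝ) =
      ∑ T, T.card * ν T / (d - 1).choose (T.card - 1) := by
    rw [sum_sum_compl_eq_sum_sum_erase]
    refine sum_congr rfl fun T _ => ?_
    rw [sum_congr rfl fun i hi => by rw [insert_erase hi, card_erase_of_mem hi], sum_const,
      nsmul_eq_mul, mul_div_assoc]
  have hloss : ∑ S, ∑ i ∈ Sᶜ, ν S / ((d - 1).choose S.card : ℝ) =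
      ∑ T, (d - T.card) * ν T / (d - 1).choose T.card := by
    refine sum_congr rfl fun T _ => ?_
    rw [sum_const, nsmul_eq_mul, card_compl, Fintype.card_fin,
      Nat.cast_sub (by simpa using card_le_univ T), mul_div_assoc]
  calc ∑ i, shapley d ν i
      = 1 / d * ∑ S, ∑ i ∈ Sᶜ, (ν (insert i S) - ν S) / ((d - 1).choose S.card : ℝ) := by
        simp only [shapley_eq_sum_filter_notMem, ← mul_sum, hswap]
    _ = 1 / d * ∑ T, (T.card * ν T / (d - 1).choose (T.card - 1)
          - (d - T.card) * ν T / (d - 1).choose T.card) := by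
        simp only [sub_div, sum_sub_distrib, hgain, hloss]
    _ = ν univ := by
        simp only [card_mul_div_choose_pred_sub_eq_ite ν hν, sum_ite_eq', mem_univ,
          if_true]
        field_simp

lemma sub_one_mul_shapley_sub_shapley (hd : 2 ≤ d) {i j : Fin d} (hij : i ≠ j) :
    ((d : ℝ) - 1) * (shapley d ν i - shapley d ν j) =
      ∑ T ∈ ({i, j}ᶜ : Finset (Fin d)).powerset,
        (ν (insert i T) - ν (insert j T)) / (d - 2).choose T.card := by
  obtain ⟨n, rfl⟩ : ∃ n, d = n + 2 := ⟨d - 2, by omega⟩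
  simp only [shapley_eq_sum_filter_notMem, sum_filter, sum_univ_eq_sum_powerset_compl_pair hij,
    ← mul_sub, ← sum_sub_distrib, mul_sum, ← mul_assoc]
  refine sum_congr rfl fun T hT => ?_
  have hcard := card_le_sub_two_of_mem_powerset_compl_pair hij hT
  have hiT : i ∉ T := fun h => by simpa using mem_powerset.1 hT h
  have hjT : j ∉ T := fun h => by simpa using mem_powerset.1 hT h
  simp only [mem_insert, hiT, hjT, hij, hij.symm, insert_comm j i, not_false_eq_true,
    or_false, false_or, if_true, not_true_eq_false, if_false, add_zero, card_insert_of_notMem hiT,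
    card_insert_of_notMem hjT, show n + 2 - 1 = n + 1 from rfl, Nat.add_sub_cancel] at hcard ⊢
  have : (0 : ℝ) < n.choose T.card := by exact_mod_cast Nat.choose_pos hcard
  calc _ = (n + 1) / (n + 2) * (ν (insert i T) - ν (insert j T)) *
        (((n + 1).choose T.card : ℝ)⁻¹ + ((n + 1).choose (T.card + 1) : ℝ)⁻¹) := by
        push_cast
        ring
    _ = _ := by
        rw [inv_choose_add_inv_choose_succ_s7 hcard]
        field_simp

lemma wlsGrad_shapley_eq (hd : 2 ≤ d) (i j : Fin d) :
    wlsGrad (shapleyWeight d) ν (shapley d ν) i = wlsGrad (shapleyWeight d) ν (shapley d ν) j := by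
  rcases eq_or_ne i j with rfl | hij
  · rfl
  rw [← sub_eq_zero, wlsGrad, wlsGrad, sum_filter, sum_filter, ← sum_sub_distrib,
    sum_univ_eq_sum_powerset_compl_pair hij]
  calc _ = ∑ T ∈ ({i, j}ᶜ : Finset (Fin d)).powerset,
        ((ν (insert i T) - ν (insert j T)) / (d - 2).choose T.card
          - (shapley d ν i - shapley d ν j) * ((d - 2).choose T.card : ℝ)⁻¹) := by
        refine sum_congr rfl fun T hT => ?_
        have hcard := card_le_sub_two_of_mem_powerset_compl_pair hij hT
        have hiT : i ∉ T := fun h => by simpa using mem_powerset.1 hT h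
        have hjT : j ∉ T := fun h => by simpa using mem_powerset.1 hT h
        simp only [mem_insert, hiT, hjT, hij, hij.symm, or_false, or_true,
          if_true, if_false, shapleyWeight_insert hd hiT hcard, shapleyWeight_insert hd hjT hcard,
          sum_insert hiT, sum_insert hjT]
        ring
    _ = 0 := by
        rw [sum_sub_distrib, ← sub_one_mul_shapley_sub_shapley ν hd hij, ← mul_sum,
          ← card_compl_pair hij, sum_powerset_inv_choose_card, card_compl_pair hij,
          Nat.cast_sub hd]
        push_cast
        ring

end Shapley

/-- The least-squares (KernelSHAP) characterization of the Shapley value: the vector of Shapley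
values is the unique minimizer of the weighted least squares objective subject to efficiency. -/
theorem shapley_is_unique_constrained_minimizer
    (d : ℕ) (hd : 2 ≤ d)
    (ν : Finset (Fin d) → ℝ) (hν0 : ν ∅ = 0) :
    ∀ φ : Fin d → ℝ,
      ((∑ i, φ i = ν Finset.univ) ∧
        ∀ ψ : Fin d → ℝ, (∑ i, ψ i = ν Finset.univ) →
          (∑ S : Finset (Fin d), shapleyWeight d S * (ν S - ∑ i ∈ S, φ i) ^ 2) ≤
            (∑ S : Finset (Fin d), shapleyWeight d S * (ν S - ∑ i ∈ S, ψ i) ^ 2)) ↔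
      φ = fun i => shapley d ν i := by
  intro φ
  have hw₁ : ∀ i, 0 < shapleyWeight d {i} := fun i => shapleyWeight_singleton hd i ▸ one_pos
  exact wls_constrained_minimizer_iff ν shapleyWeight_nonneg hw₁ (sum_shapley ν hν0)
    ⟨_, fun i => wlsGrad_shapley_eq ν hd i ⟨0, by omega⟩⟩ φ
end

section
/- Let d ≥ 1 and let (S_1,w_1),…,(S_{2r},w_{2r}) be a paired weighted sample on D = {1,…,d}. Then P_d · X̃_1ᵀ X̃_1 · M_{2→1} = P_d · X̃_1ᵀ X̃_{≤2} as d × d_2 real matrices. -/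
open Finset Matrix

/-- Design matrix `X̃_{≤2}` of a weighted sample. -/
noncomputable def X2mat (d r : ℕ) (S : Fin r × Bool → Finset (Fin d))
    (w : Fin r × Bool → ℝ) :
    Matrix (Fin r × Bool) {T : Finset (Fin d) // T.Nonempty ∧ T.card ≤ 2} ℝ :=
  fun ℓ T => Real.sqrt (w ℓ) * (if (T : Finset (Fin d)) ⊆ S ℓ then 1 else 0)

/-- Design matrix `X̃_1` of a weighted sample. -/
noncomputable def X1mat (d r : ℕ) (S : Fin r × Bool → Finset (Fin d))
    (w : Fin r × Bool → ℝ) :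
    Matrix (Fin r × Bool) (Fin d) ℝ :=
  fun ℓ i => Real.sqrt (w ℓ) * (if i ∈ S ℓ then 1 else 0)

/-- The matrix `M_{2→1}` with entries `1[i ∈ T]/|T|`. -/
noncomputable def M21 (d : ℕ) :
    Matrix (Fin d) {T : Finset (Fin d) // T.Nonempty ∧ T.card ≤ 2} ℝ :=
  fun i T => (if i ∈ (T : Finset (Fin d)) then 1 else 0) / ((T : Finset (Fin d)).card : ℝ)

/-- `P_p = I − (1/p)·𝟙𝟙ᵀ`, the orthogonal projection off the all-ones vector. -/
noncomputable def projOnes (p : ℕ) : Matrix (Fin p) (Fin p) ℝ :=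
  1 - (p : ℝ)⁻¹ • Matrix.of (fun _ _ => (1 : ℝ))

/-! Write `q(T, A) = |T ∩ A| / |T| - 1[T ⊆ A]`, so that the residual `X̃₁ M_{2→1} - X̃_{≤2}` has
entries `√w_ℓ · q(T, S_ℓ)`. For `1 ≤ |T| ≤ 2` one checks `q(T, Aᶜ) = q(T, A)`, so in
`X̃₁ᵀ (X̃₁ M_{2→1} - X̃_{≤2})` the two halves of each pair contribute
`w_j q(T, S_j) (1[i ∈ S_j] + 1[i ∉ S_j]) = w_j q(T, S_j)`, independently of the player `i`.
A matrix whose rows are all equal is annihilated by `P_d`. -/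

section SubsetDefect

variable {α : Type*} [Fintype α] [DecidableEq α]

noncomputable def subsetDefect (T A : Finset α) : ℝ :=
  (#(T ∩ A) : ℝ) / #T - if T ⊆ A then 1 else 0

theorem subset_compl_iff_card_inter_eq_zero (T A : Finset α) : T ⊆ Aᶜ ↔ #(T ∩ A) = 0 := by
  rw [subset_compl_iff_disjoint_right, card_eq_zero, disjoint_iff_inter_eq_empty]

theorem subsetDefect_compl {T : Finset α} (hT : T.Nonempty) (hT2 : #T ≤ 2) (A : Finset α) :
    subsetDefect T Aᶜ = subsetDefect T A := by
  have hsplit : #(T ∩ A) + #(T ∩ Aᶜ) = #T := by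
    rw [← card_union_of_disjoint (disjoint_compl_right.mono inter_subset_right inter_subset_right),
      ← inter_union_distrib_left, union_compl, inter_univ]
  have hsub : T ⊆ A ↔ #(T ∩ Aᶜ) = 0 := by
    rw [← subset_compl_iff_card_inter_eq_zero, compl_compl]
  unfold subsetDefect
  simp only [← hsplit, hsub, subset_compl_iff_card_inter_eq_zero]
  have hpos : 0 < #(T ∩ A) + #(T ∩ Aᶜ) := hsplit ▸ hT.card_pos
  generalize #(T ∩ A) = a, #(T ∩ Aᶜ) = b at *
  obtain ⟨rfl | rfl | rfl, rfl | rfl | rfl⟩ :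
      (a = 0 ∨ a = 1 ∨ a = 2) ∧ (b = 0 ∨ b = 1 ∨ b = 2) := by omega
  all_goals first | omega | norm_num

end SubsetDefect

theorem projOnes_mul_eq_zero_of_rows_eq {p : ℕ} {n : Type*} {A : Matrix (Fin p) n ℝ}
    (hA : ∀ i k, A i = A k) : projOnes p * A = 0 := by
  ext i T
  have hp : (p : ℝ) ≠ 0 := Nat.cast_ne_zero.mpr (Fin.pos i).ne'
  simp [projOnes, sub_mul, Matrix.mul_apply, hA _ i, hp, Matrix.one_apply]

section DesignMatrices

variable {d r : ℕ} (S : Fin r × Bool → Finset (Fin d)) (w : Fin r × Bool → ℝ)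

theorem X1mat_mul_M21_apply (ℓ : Fin r × Bool) (T : {T : Finset (Fin d) // T.Nonempty ∧ #T ≤ 2}) :
    (X1mat d r S w * M21 d) ℓ T = √(w ℓ) * (#(T.1 ∩ S ℓ) / #T.1) := by
  simp only [Matrix.mul_apply, X1mat, M21, mul_assoc, ← mul_sum, mul_div, ← sum_div,
    ite_zero_mul_ite_zero, mul_one, sum_boole]
  congr 4
  ext k
  simp [and_comm]

theorem X1mat_mul_M21_sub_X2mat_apply (ℓ : Fin r × Bool)
    (T : {T : Finset (Fin d) // T.Nonempty ∧ #T ≤ 2}) :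
    (X1mat d r S w * M21 d - X2mat d r S w) ℓ T = √(w ℓ) * subsetDefect T.1 (S ℓ) := by
  rw [Matrix.sub_apply, X1mat_mul_M21_apply, X2mat, subsetDefect, mul_sub]

theorem X1mat_transpose_mul_residual_apply
    (hpairS : ∀ j, S (j, true) = (S (j, false))ᶜ) (hpairw : ∀ j, w (j, true) = w (j, false))
    (i : Fin d) (T : {T : Finset (Fin d) // T.Nonempty ∧ #T ≤ 2}) :
    ((X1mat d r S w)ᵀ * (X1mat d r S w * M21 d - X2mat d r S w)) i T =
      ∑ j, √(w (j, false)) ^ 2 * subsetDefect T.1 (S (j, false)) := by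
  simp only [Matrix.mul_apply, transpose_apply, X1mat_mul_M21_sub_X2mat_apply, X1mat,
    Fintype.sum_prod_type, Fintype.sum_bool, hpairS, hpairw, subsetDefect_compl T.2.1 T.2.2]
  refine sum_congr rfl fun j _ => ?_
  by_cases hi : i ∈ S (j, false) <;> simp [hi] <;> ring

end DesignMatrices

theorem paired_gram_projection_identity_general
    (d r : ℕ)
    (S : Fin r × Bool → Finset (Fin d)) (w : Fin r × Bool → ℝ)
    (hpairS : ∀ j : Fin r, S (j, true) = (Finset.univ : Finset (Fin d)) \ S (j, false))
    (hpairw : ∀ j : Fin r, w (j, true) = w (j, false)) :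
    projOnes d * ((X1mat d r S w).transpose * X1mat d r S w) * M21 d =
      projOnes d * ((X1mat d r S w).transpose * X2mat d r S w) := by
  have hresidual := X1mat_transpose_mul_residual_apply S w
    (fun j => (hpairS j).trans (compl_eq_univ_sdiff _).symm) hpairw
  rw [← sub_eq_zero, Matrix.mul_assoc, Matrix.mul_assoc, ← Matrix.mul_sub, ← Matrix.mul_sub]
  exact projOnes_mul_eq_zero_of_rows_eq fun i k => funext fun T => by rw [hresidual, hresidual]

/-- For a paired weighted sample, `P_d · X̃₁ᵀX̃₁ · M_{2→1} = P_d · X̃₁ᵀX̃_{≤2}`. -/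
theorem paired_gram_projection_identity
    (d r : ℕ) (hd : 1 ≤ d)
    (S : Fin r × Bool → Finset (Fin d)) (w : Fin r × Bool → ℝ)
    (hw : ∀ ℓ, 0 < w ℓ)
    (hpairS : ∀ j : Fin r, S (j, true) = (Finset.univ : Finset (Fin d)) \ S (j, false))
    (hpairw : ∀ j : Fin r, w (j, true) = w (j, false)) :
    projOnes d * ((X1mat d r S w).transpose * X1mat d r S w) * M21 d =
      projOnes d * ((X1mat d r S w).transpose * X2mat d r S w) :=
  paired_gram_projection_identity_general d r S w hpairS hpairw
end
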